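/- Let Q be a finite quiver without oriented cycles and β a dimension vector. Every GIT-cone C(σ), for σ ∈ C(Q,β), is a rational convex polyhedral cone, and there are only finitely many GIT-cones. -/

import Mathlib

open scoped BigOperators

namespace QuiverGIT

noncomputable section

variable {Q0 Q1 : Type} [Fintype Q0] [Fintype Q1]

/-- The representation space `Rep(Q,β)` of a quiver with vertex set `Q0`, arrow set `Q1`,
tail map `tl` and head map `hd`, for the dimension vector `β`. -/
abbrev RepSpace (tl hd : Q1 → Q0) (β : Q0 → ℕ) : Type :=
  ∀ a : Q1, Matrix (Fin (β (hd a))) (Fin (β (tl a))) ℂ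

/-- The quiver has no oriented cycles. -/
def NoOrientedCycles (tl hd : Q1 → Q0) : Prop :=
  ∀ (n : ℕ) (c : Fin (n + 1) → Q1),
    (∀ i : Fin n, hd (c i.castSucc) = tl (c i.succ)) → hd (c (Fin.last n)) ≠ tl (c 0)

/-- Pairing `σ(γ) = ∑ σ(x) γ(x)` of a real weight with a dimension vector. -/
def wt (σ : Q0 → ℝ) (γ : Q0 → ℕ) : ℝ := ∑ x, σ x * γ x

/-- The weight has integer coordinates. -/
def IsIntegralWt (σ : Q0 → ℝ) : Prop := ∀ x, ∃ n : ℤ, σ x = n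

variable {tl hd : Q1 → Q0} {β : Q0 → ℕ}

/-- A family of subspaces `S x ≤ ℂ^{β(x)}` is a subrepresentation of `W`. -/
def IsSubrep (W : RepSpace tl hd β) (S : ∀ x, Submodule ℂ (Fin (β x) → ℂ)) : Prop :=
  ∀ a : Q1, ∀ v ∈ S (tl a), (W a).mulVec v ∈ S (hd a)

/-- The dimension vector of a family of subspaces. -/
def dimVec (S : ∀ x : Q0, Submodule ℂ (Fin (β x) → ℂ)) : Q0 → ℕ :=
  fun x => Module.finrank ℂ (S x)

/-- `W` is `σ`-semi-stable. -/
def Semistable (σ : Q0 → ℝ) (W : RepSpace tl hd β) : Prop :=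
  wt σ β = 0 ∧
    ∀ S : ∀ x, Submodule ℂ (Fin (β x) → ℂ), IsSubrep W S → wt σ (dimVec S) ≤ 0

/-- `W` is `σ`-stable. -/
def Stable (σ : Q0 → ℝ) (W : RepSpace tl hd β) : Prop :=
  wt σ β = 0 ∧
    ∀ S : ∀ x, Submodule ℂ (Fin (β x) → ℂ), IsSubrep W S →
      S ≠ (fun _ => ⊥) → S ≠ (fun _ => ⊤) → wt σ (dimVec S) < 0

/-- The set `Rep(Q,β)^{ss}_σ` of `σ`-semi-stable representations. -/
def ssSet (tl hd : Q1 → Q0) (β : Q0 → ℕ) (σ : Q0 → ℝ) : Set (RepSpace tl hd β) :=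
  {W | Semistable σ W}

/-- `β₁ ↪ β` : every `β`-dimensional representation has a subrepresentation of
dimension vector `β₁`. -/
def Embeds (tl hd : Q1 → Q0) (β β₁ : Q0 → ℕ) : Prop :=
  ∀ W : RepSpace tl hd β, ∃ S : ∀ x, Submodule ℂ (Fin (β x) → ℂ),
    IsSubrep W S ∧ ∀ x, Module.finrank ℂ (S x) = β₁ x

/-- The cone `C(Q,β)` of effective weights. -/
def EffCone (tl hd : Q1 → Q0) (β : Q0 → ℕ) : Set (Q0 → ℝ) :=
  {σ | wt σ β = 0 ∧ ∀ β₁ : Q0 → ℕ, Embeds tl hd β β₁ → wt σ β₁ ≤ 0}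

/-- The action of `GL(β) = ∏ GL(β(x))` on `Rep(Q,β)` by simultaneous conjugation. -/
def glAct (g : ∀ x, GL (Fin (β x)) ℂ) (W : RepSpace tl hd β) : RepSpace tl hd β :=
  fun a => (g (hd a)).val * W a * ((g (tl a))⁻¹).val

/-- The `GL(β)`-orbit of `W`. -/
def glOrbit (W : RepSpace tl hd β) : Set (RepSpace tl hd β) :=
  {V | ∃ g, V = glAct g W}

/-- The coordinates of a point of `Rep(Q,β)`. -/
def coordFn (W : RepSpace tl hd β) : (Σ a : Q1, Fin (β (hd a)) × Fin (β (tl a))) → ℂ :=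
  fun p => W p.1 p.2.1 p.2.2

/-- The Zariski closure of a subset of `Rep(Q,β)`: the set of points where every
polynomial vanishing on the subset vanishes. -/
def zClosure (Z : Set (RepSpace tl hd β)) : Set (RepSpace tl hd β) :=
  {V | ∀ p : MvPolynomial ((a : Q1) × (Fin (β (hd a)) × Fin (β (tl a)))) ℂ,
      (∀ U ∈ Z, MvPolynomial.eval (coordFn U) p = 0) →
        MvPolynomial.eval (coordFn V) p = 0}

/-- `W` is `σ`-polystable : it is `σ`-semi-stable and its `GL(β)`-orbit is
(Zariski) closed in `Rep(Q,β)^{ss}_σ`. -/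
def Polystable (σ : Q0 → ℝ) (W : RepSpace tl hd β) : Prop :=
  Semistable σ W ∧ zClosure (glOrbit W) ∩ ssSet tl hd β σ = glOrbit W

/-- The orbit cone `Ω(W)` of a representation `W`. -/
def OmegaCone (W : RepSpace tl hd β) : Set (Q0 → ℝ) :=
  {σ | Semistable σ W}

/-- The GIT-cone `C(σ) = {σ' ∈ ℝ^{Q_0} : Rep(Q,β)^{ss}_σ ⊆ Rep(Q,β)^{ss}_{σ'}}`. -/
def gitCone (tl hd : Q1 → Q0) (β : Q0 → ℕ) (σ : Q0 → ℝ) : Set (Q0 → ℝ) :=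
  {σ' | ssSet tl hd β σ ⊆ ssSet tl hd β σ'}

/-- The GIT-cone `C(σ) = {σ' ∈ C(Q,β) : Rep(Q,β)^{ss}_σ ⊆ Rep(Q,β)^{ss}_{σ'}}`. -/
def gitConeE (tl hd : Q1 → Q0) (β : Q0 → ℕ) (σ : Q0 → ℝ) : Set (Q0 → ℝ) :=
  {σ' | σ' ∈ EffCone tl hd β ∧ ssSet tl hd β σ ⊆ ssSet tl hd β σ'}

/-- A rational convex polyhedral cone in `ℝ^{Q_0}` : a set cut out by finitely many
homogeneous linear inequalities with rational coefficients. -/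
def IsRatPolyCone (C : Set (Q0 → ℝ)) : Prop :=
  ∃ s : Finset (Q0 → ℚ), C = {σ | ∀ v ∈ s, (∑ x, σ x * (v x : ℝ)) ≤ 0}

/-- `F` is a face of the cone `C`, cut out by a supporting linear functional. -/
def IsFaceOf (F C : Set (Q0 → ℝ)) : Prop :=
  ∃ ℓ : (Q0 → ℝ) →ₗ[ℝ] ℝ, (∀ σ ∈ C, ℓ σ ≤ 0) ∧ F = {σ ∈ C | ℓ σ = 0}

/-- The restriction of `W` to the subrepresentation `T` is a `σ`-stable representation
(subrepresentations of `W|_T` are exactly the subrepresentations of `W` contained in `T`). -/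
def IsStableOn (σ : Q0 → ℝ) (W : RepSpace tl hd β)
    (T : ∀ x, Submodule ℂ (Fin (β x) → ℂ)) : Prop :=
  wt σ (dimVec T) = 0 ∧
    ∀ U : ∀ x, Submodule ℂ (Fin (β x) → ℂ), IsSubrep W U → (∀ x, U x ≤ T x) →
      U ≠ (fun _ => ⊥) → U ≠ T → wt σ (dimVec U) < 0

/-- `W` is a direct sum of `σ`-stable representations : `ℂ^β` decomposes as an internal
direct sum of subrepresentations on each of which `W` restricts to a `σ`-stable
representation. -/
def IsDirectSumOfStables (σ : Q0 → ℝ) (W : RepSpace tl hd β) : Prop :=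
  ∃ (n : ℕ) (T : Fin n → ∀ x, Submodule ℂ (Fin (β x) → ℂ)),
    (∀ i, IsSubrep W (T i)) ∧
    (∀ x, iSupIndep fun i => T i x) ∧
    (∀ x, (⨆ i, T i x) = ⊤) ∧
    ∀ i, IsStableOn σ W (T i)

/-- The factor `T/S` of two nested subrepresentations `S ≤ T` of `W` is a `σ`-stable
representation (subrepresentations of `T/S` correspond to intermediate
subrepresentations `S ≤ U ≤ T` of `W`, with `d_{U/S} = d_U - d_S`). -/
def FactorStable (σ : Q0 → ℝ) (W : RepSpace tl hd β)
    (S T : ∀ x, Submodule ℂ (Fin (β x) → ℂ)) : Prop :=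
  wt σ (dimVec T) - wt σ (dimVec S) = 0 ∧
    ∀ U : ∀ x, Submodule ℂ (Fin (β x) → ℂ), IsSubrep W U →
      (∀ x, S x ≤ U x) → (∀ x, U x ≤ T x) → U ≠ S → U ≠ T →
        wt σ (dimVec U) - wt σ (dimVec S) < 0

/-- A Jordan–Hölder filtration `0 = W_0 ⊊ W_1 ⊊ ⋯ ⊊ W_l = W` of `W` in the category of
`σ`-semi-stable representations: all factors `W_i/W_{i-1}` are `σ`-stable. -/
def IsJHFiltration (σ : Q0 → ℝ) (W : RepSpace tl hd β) (l : ℕ)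
    (S : Fin (l + 1) → ∀ x, Submodule ℂ (Fin (β x) → ℂ)) : Prop :=
  (∀ i, IsSubrep W (S i)) ∧
  (∀ x, S 0 x = ⊥) ∧
  (∀ x, S (Fin.last l) x = ⊤) ∧
  (∀ i : Fin l, ∀ x, S i.castSucc x ≤ S i.succ x) ∧
  (∀ i : Fin l, S i.castSucc ≠ S i.succ) ∧
  (∀ i : Fin l, FactorStable σ W (S i.castSucc) (S i.succ))

/-- `V` is isomorphic to the associated graded representation
`⊕_{i=1}^{l} S_i/S_{i-1}` of the filtration `S` of `W` : there are linear maps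
`f i x : ℂ^{β(x)} → ℂ^{β(x)}` which vanish on `S_{i-1}`, are injective on `S_i`
modulo `S_{i-1}`, intertwine `W` and `V` on `S_i`, and whose images decompose
`ℂ^{β(x)}` as an internal direct sum. -/
def IsGradedIso (W V : RepSpace tl hd β) (l : ℕ)
    (S : Fin (l + 1) → ∀ x, Submodule ℂ (Fin (β x) → ℂ)) : Prop :=
  ∃ f : Fin l → ∀ x, (Fin (β x) → ℂ) →ₗ[ℂ] (Fin (β x) → ℂ),
    (∀ (i : Fin l) (x : Q0), ∀ v ∈ S i.castSucc x, f i x v = 0) ∧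
    (∀ (i : Fin l) (x : Q0), ∀ v ∈ S i.succ x, f i x v = 0 → v ∈ S i.castSucc x) ∧
    (∀ (i : Fin l) (a : Q1), ∀ v ∈ S i.succ (tl a),
      f i (hd a) ((W a).mulVec v) = (V a).mulVec (f i (tl a) v)) ∧
    (∀ x : Q0, iSupIndep fun i : Fin l => (S i.succ x).map (f i x)) ∧
    (∀ x : Q0, (⨆ i : Fin l, (S i.succ x).map (f i x)) = ⊤)

end

/-! A representation is `σ'`-semi-stable iff `σ'(β) = 0` and `σ'` is non-positive on the
dimension vectors of its subrepresentations. Hence, as soon as some representation is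
`σ`-semi-stable, `C(σ)` is cut out by `σ'(β) = 0` and by `σ'(γ) ≤ 0` for the dimension vectors
`γ` of subrepresentations of `σ`-semi-stable representations; otherwise `C(σ)` is everything.
All these `γ` lie in the finite box `0 ≤ γ ≤ β`, which gives rationality and finiteness. -/

section

variable {Q0 Q1 : Type} {tl hd : Q1 → Q0} {β : Q0 → ℕ}

lemma dimVec_le (S : ∀ x, Submodule ℂ (Fin (β x) → ℂ)) : dimVec S ≤ β := fun x => by
  simpa [dimVec, Module.finrank_fin_fun] using Submodule.finrank_le (S x)

variable [Fintype Q0]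

def coneOf (β : Q0 → ℕ) (U : Set (Q0 → ℕ)) : Set (Q0 → ℝ) :=
  {σ | wt σ β = 0 ∧ ∀ γ ∈ U, wt σ γ ≤ 0}

lemma isRatPolyCone_coneOf {U : Set (Q0 → ℕ)} (hU : U.Finite) :
    IsRatPolyCone (coneOf β U) := by
  classical
  let toRat : (Q0 → ℕ) → Q0 → ℚ := fun γ x => γ x
  have pair (σ : Q0 → ℝ) (γ : Q0 → ℕ) : ∑ x, σ x * ((toRat γ x : ℚ) : ℝ) = wt σ γ := by
    simp [toRat, wt]
  have pair_neg (σ : Q0 → ℝ) (γ : Q0 → ℕ) :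
      ∑ x, σ x * (((-toRat γ) x : ℚ) : ℝ) = -wt σ γ := by
    simp [toRat, wt]
  refine ⟨insert (-toRat β) (insert (toRat β) (hU.toFinset.image toRat)), ?_⟩
  ext σ
  simp only [coneOf, Set.mem_ofPred_eq, Finset.forall_mem_insert, Finset.forall_mem_image,
    Set.Finite.mem_toFinset, pair, pair_neg]
  constructor
  · rintro ⟨hβ, hγ⟩
    exact ⟨by linarith, hβ.le, hγ⟩
  · rintro ⟨hβ_neg, hβ, hγ⟩
    exact ⟨le_antisymm hβ (by linarith), hγ⟩

def subrepDimVecs (tl hd : Q1 → Q0) (β : Q0 → ℕ) (σ : Q0 → ℝ) : Set (Q0 → ℕ) :=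
  {γ | ∃ W ∈ ssSet tl hd β σ, ∃ S, IsSubrep W S ∧ dimVec S = γ}

lemma subrepDimVecs_subset_Iic (σ : Q0 → ℝ) : subrepDimVecs tl hd β σ ⊆ Set.Iic β := by
  rintro γ ⟨W, -, S, -, rfl⟩
  exact dimVec_le S

lemma gitCone_eq_coneOf {σ : Q0 → ℝ} (h : (ssSet tl hd β σ).Nonempty) :
    gitCone tl hd β σ = coneOf β (subrepDimVecs tl hd β σ) := by
  obtain ⟨W₀, hW₀⟩ := h
  ext σ'
  constructor
  · intro hss
    refine ⟨(hss hW₀).1, ?_⟩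
    rintro γ ⟨W, hW, S, hS, rfl⟩
    exact (hss hW).2 S hS
  · rintro ⟨hβ, hγ⟩ W hW
    exact ⟨hβ, fun S hS => hγ _ ⟨W, hW, S, hS, rfl⟩⟩

lemma gitCone_eq_univ {σ : Q0 → ℝ} (h : ssSet tl hd β σ = ∅) :
    gitCone tl hd β σ = Set.univ := by
  simp [gitCone, h]

end

variable {Q0 Q1 : Type} [Fintype Q0] [Fintype Q1] {tl hd : Q1 → Q0} {β : Q0 → ℕ}

theorem git_cones_rational_and_finitely_many_general :
    (∀ σ ∈ EffCone tl hd β, IsRatPolyCone (gitCone tl hd β σ)) ∧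
    {C : Set (Q0 → ℝ) | ∃ σ ∈ EffCone tl hd β, C = gitCone tl hd β σ}.Finite := by
  classical
  have dims_finite (σ : Q0 → ℝ) : (subrepDimVecs tl hd β σ).Finite :=
    (Set.finite_Iic β).subset (subrepDimVecs_subset_Iic σ)
  constructor
  · intro σ _
    rcases (ssSet tl hd β σ).eq_empty_or_nonempty with h | h
    · exact gitCone_eq_univ h ▸ ⟨∅, by simp⟩
    · exact gitCone_eq_coneOf h ▸ isRatPolyCone_coneOf (dims_finite σ)
  · have candidates_finite : (insert Set.univ (coneOf β '' Set.Iic (Set.Iic β))).Finite :=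
      ((Set.finite_Iic β).finite_subsets.image _).insert _
    refine candidates_finite.subset ?_
    rintro C ⟨σ, -, rfl⟩
    rcases (ssSet tl hd β σ).eq_empty_or_nonempty with h | h
    · exact Or.inl (gitCone_eq_univ h)
    · exact Or.inr ⟨_, subrepDimVecs_subset_Iic σ, (gitCone_eq_coneOf h).symm⟩

/-- Every GIT-cone is a rational convex polyhedral cone and there are only
finitely many GIT-cones. -/
theorem git_cones_rational_and_finitely_many (hQ : NoOrientedCycles tl hd) :
    (∀ σ ∈ EffCone tl hd β, IsRatPolyCone (gitCone tl hd β σ)) ∧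
    {C : Set (Q0 → ℝ) | ∃ σ ∈ EffCone tl hd β, C = gitCone tl hd β σ}.Finite :=
  git_cones_rational_and_finitely_many_general

end QuiverGIT
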